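/- For every k ≥ 1, the base-b number 10...0β (a leading 1, k−1 zeros, and final digit β = b−1), i.e., b^k + (b−1), is a dismal prime. In particular there are infinitely many dismal primes in every base b ≥ 2. -/

import Mathlib

/-- The `i`-th base-`b` digit of `n`. -/
def digit (b n i : ℕ) : ℕ := n / b ^ i % b

/-- Dismal addition in base `b`: digitwise maximum of base-`b` digits. -/
def dadd (b m n : ℕ) : ℕ :=
  ∑ i ∈ Finset.range (m + n + 1), max (digit b m i) (digit b n i) * b ^ i

/-- Dismal multiplication in base `b`: digit convolution with `min` as digit
product and `max` as digit sum (no carries). -/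
def dmul (b m n : ℕ) : ℕ :=
  ∑ k ∈ Finset.range (m + n + 1),
    ((Finset.range (k + 1)).sup fun i => min (digit b m i) (digit b n (k - i))) * b ^ k

/-- The number of base-`b` digits of `n`. -/
def dlen (b n : ℕ) : ℕ := (Nat.digits b n).length

/-- A base-`b` dismal prime: a number other than `b - 1` whose only dismal
factorizations are `(b - 1) ⊠ p`. -/
def DPrime (b p : ℕ) : Prop :=
  p ≠ b - 1 ∧ ∀ m n : ℕ, dmul b m n = p →
    (m = b - 1 ∧ n = p) ∨ (m = p ∧ n = b - 1)

/-!
Write `β = b - 1` and `p = b ^ k + β`, whose digits are `β` at position `0`, `1` at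
position `k` and `0` elsewhere. Since dismal multiplication has no carries, the `j`-th digit of
`m ⊠ n` is the maximum of `min (mᵢ) (n_{j-i})`, and in particular dominates each such minimum.
From `p = m ⊠ n` the digit `β` at `0` forces `m₀ = n₀ = β`; pairing with these, every other
digit of `m` and `n` is bounded by the corresponding digit of `p`, so both numbers are
supported on positions `0` and `k`, with `mₖ, nₖ ≤ 1`. Digit `2k` of `p` vanishes, so `mₖ` and
`nₖ` are not both `1`, and digit `k` of `p` is `1`, so they are not both `0`.
Hence `{m, n} = {β, p}`.
-/

section Digits

variable {b : ℕ}

lemma digit_zero (b n : ℕ) : digit b n 0 = n % b := by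
  simp [digit]

lemma digit_succ (b n i : ℕ) : digit b n (i + 1) = digit b (n / b) i := by
  simp only [digit, Nat.div_div_eq_div_mul, pow_succ']

lemma digit_lt (hb : 0 < b) (n i : ℕ) : digit b n i < b :=
  Nat.mod_lt _ hb

lemma digit_le_pred (hb : 0 < b) (n i : ℕ) : digit b n i ≤ b - 1 :=
  Nat.le_pred_of_lt (digit_lt hb n i)

lemma digit_eq_zero_of_lt {n i : ℕ} (h : n < b ^ i) : digit b n i = 0 := by
  simp [digit, Nat.div_eq_of_lt h]

lemma digit_eq_zero_of_lt_index (hb : 1 < b) {n i : ℕ} (h : n < i) : digit b n i = 0 :=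
  digit_eq_zero_of_lt ((Nat.lt_pow_self hb).trans_le (Nat.pow_le_pow_right (by omega) h.le))

lemma digit_add_mul_zero {r : ℕ} (hr : r < b) (q : ℕ) : digit b (r + b * q) 0 = r := by
  rw [digit_zero, Nat.add_mul_mod_self_left, Nat.mod_eq_of_lt hr]

lemma digit_add_mul_succ {r : ℕ} (hr : r < b) (q j : ℕ) :
    digit b (r + b * q) (j + 1) = digit b q j := by
  rw [digit_succ, Nat.add_mul_div_left _ _ (by omega), Nat.div_eq_of_lt hr, zero_add]

lemma digit_of_lt {r : ℕ} (hr : r < b) (j : ℕ) : digit b r j = if j = 0 then r else 0 := by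
  rcases j with _ | j
  · simp [digit_zero, Nat.mod_eq_of_lt hr]
  · rw [digit_succ, Nat.div_eq_of_lt hr]
    simp [digit]

lemma digit_pow (hb : 1 < b) (k j : ℕ) : digit b (b ^ k) j = if j = k then 1 else 0 := by
  induction k generalizing j with
  | zero => simpa [eq_comm] using digit_of_lt hb j
  | succ k ih =>
    have hpow : b ^ (k + 1) = 0 + b * b ^ k := by ring
    rcases j with _ | j
    · rw [hpow, digit_add_mul_zero (by omega)]
      simp
    · rw [hpow, digit_add_mul_succ (by omega), ih]
      simp

lemma digit_pow_add_pred (hb : 1 < b) {k : ℕ} (hk : 1 ≤ k) (j : ℕ) :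
    digit b (b ^ k + (b - 1)) j = if j = 0 then b - 1 else if j = k then 1 else 0 := by
  obtain ⟨k, rfl⟩ : ∃ l, k = l + 1 := ⟨k - 1, by omega⟩
  have hp : b ^ (k + 1) + (b - 1) = (b - 1) + b * b ^ k := by ring
  rcases j with _ | j
  · simp [hp, digit_add_mul_zero (by omega : b - 1 < b)]
  · simp [hp, digit_add_mul_succ (by omega : b - 1 < b), digit_pow hb]

lemma digit_sum_mul_pow (c : ℕ → ℕ) (hc : ∀ i, c i < b) (L j : ℕ) :
    digit b (∑ i ∈ Finset.range L, c i * b ^ i) j = if j < L then c j else 0 := by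
  induction L generalizing c j with
  | zero => simp [digit]
  | succ L ih =>
    have hsum : ∑ i ∈ Finset.range (L + 1), c i * b ^ i =
        c 0 + b * ∑ i ∈ Finset.range L, c (i + 1) * b ^ i := by
      rw [Finset.sum_range_succ', add_comm, Finset.mul_sum, pow_zero, mul_one]
      exact congrArg _ (Finset.sum_congr rfl fun i _ => by ring)
    rcases j with _ | j
    · simp [hsum, digit_add_mul_zero (hc 0)]
    · simp [hsum, digit_add_mul_succ (hc 0), ih _ (fun i => hc (i + 1))]

lemma eq_of_lt_pow_of_digit_eq (hb : 0 < b) (L : ℕ) {m n : ℕ} (hm : m < b ^ L) (hn : n < b ^ L)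
    (h : ∀ i, digit b m i = digit b n i) : m = n := by
  induction L generalizing m n with
  | zero => simp_all
  | succ L ih =>
    have hmod : m % b = n % b := by simpa [digit_zero] using h 0
    have hdiv : m / b = n / b := by
      refine ih ?_ ?_ fun i => by simpa [digit_succ] using h (i + 1)
      all_goals rwa [Nat.div_lt_iff_lt_mul hb, ← pow_succ]
    rw [← Nat.div_add_mod m b, ← Nat.div_add_mod n b, hmod, hdiv]

lemma eq_of_digit_eq (hb : 1 < b) {m n : ℕ} (h : ∀ i, digit b m i = digit b n i) : m = n := by
  have hpow : ∀ x, x ≤ m + n → x < b ^ (m + n) := fun x hx =>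
    hx.trans_lt (Nat.lt_pow_self hb)
  exact eq_of_lt_pow_of_digit_eq (by omega) (m + n) (hpow m (by omega)) (hpow n (by omega)) h

lemma eq_of_digit_eq_on_support (hb : 1 < b) {s : Finset ℕ} {m n : ℕ}
    (hm : ∀ j ∉ s, digit b m j = 0) (hn : ∀ j ∉ s, digit b n j = 0)
    (h : ∀ j ∈ s, digit b m j = digit b n j) : m = n :=
  eq_of_digit_eq hb fun j => if hj : j ∈ s then h j hj else (hm j hj).trans (hn j hj).symm

end Digits

section DismalProduct

variable {b : ℕ}

lemma digit_dmul (hb : 1 < b) (m n j : ℕ) :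
    digit b (dmul b m n) j =
      (Finset.range (j + 1)).sup fun i => min (digit b m i) (digit b n (j - i)) := by
  have hconv :
      ∀ j, ((Finset.range (j + 1)).sup fun i => min (digit b m i) (digit b n (j - i))) < b :=
    fun j => (Finset.sup_lt_iff (by simp; omega)).mpr fun i _ =>
      (min_le_left _ _).trans_lt (digit_lt (by omega) m i)
  rw [dmul, digit_sum_mul_pow _ hconv]
  split_ifs with hj
  · rfl
  · -- beyond `m + n` in every pair of positions summing to `j` one exceeds its number
    refine (Nat.eq_zero_of_le_zero (Finset.sup_le fun i _ => ?_)).symm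
    by_cases hi : m < i
    · simp [digit_eq_zero_of_lt_index hb hi]
    · simp [digit_eq_zero_of_lt_index hb (by omega : n < j - i)]

lemma min_digit_le_digit_dmul (hb : 1 < b) (m n i j : ℕ) :
    min (digit b m i) (digit b n j) ≤ digit b (dmul b m n) (i + j) := by
  rw [digit_dmul hb]
  exact Finset.le_sup_of_le (b := i) (Finset.mem_range.mpr (by omega)) (by simp)

lemma digit_dmul_eq_zero (hb : 1 < b) {m n j : ℕ}
    (h : ∀ i ≤ j, digit b m i = 0 ∨ digit b n (j - i) = 0) : digit b (dmul b m n) j = 0 := by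
  rw [digit_dmul hb]
  refine Nat.eq_zero_of_le_zero (Finset.sup_le fun i hi => ?_)
  rcases h i (by simpa [Nat.lt_succ_iff] using hi) with h | h <;> simp [h]

lemma digit_zero_eq_pred_of_digit_dmul (hb : 1 < b) {m n : ℕ}
    (h : digit b (dmul b m n) 0 = b - 1) : digit b m 0 = b - 1 ∧ digit b n 0 = b - 1 := by
  rw [digit_dmul hb] at h
  simp only [zero_add, Finset.range_one, Finset.sup_singleton, Nat.sub_self] at h
  have := digit_le_pred (by omega : 0 < b) m 0
  have := digit_le_pred (by omega : 0 < b) n 0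
  omega

lemma digit_le_digit_dmul_left (hb : 1 < b) {m n : ℕ}
    (hn : digit b n 0 = b - 1) (j : ℕ) : digit b m j ≤ digit b (dmul b m n) j := by
  simpa [hn, digit_le_pred (by omega : 0 < b) m j] using min_digit_le_digit_dmul hb m n j 0

lemma digit_le_digit_dmul_right (hb : 1 < b) {m n : ℕ}
    (hm : digit b m 0 = b - 1) (j : ℕ) : digit b n j ≤ digit b (dmul b m n) j := by
  simpa [hm, digit_le_pred (by omega : 0 < b) n j] using min_digit_le_digit_dmul hb m n 0 j

end DismalProduct

lemma eq_of_digit_le_pow_add_pred {b k x : ℕ} (hb : 1 < b) (hk : 1 ≤ k)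
    (hx : ∀ j, digit b x j ≤ digit b (b ^ k + (b - 1)) j) (hx0 : digit b x 0 = b - 1) :
    x = if digit b x k = 0 then b - 1 else b ^ k + (b - 1) := by
  have hk0 : k ≠ 0 := by omega
  have hdp := digit_pow_add_pred hb hk
  have vanish : ∀ y, (∀ j, digit b y j ≤ digit b (b ^ k + (b - 1)) j) →
      ∀ j ∉ ({0, k} : Finset ℕ), digit b y j = 0 := fun y hy j hj => by
    simp only [Finset.mem_insert, Finset.mem_singleton, not_or] at hj
    simpa [hdp, hj.1, hj.2] using hy j
  have hxk : digit b x k ≤ 1 := by simpa [hdp, hk0] using hx k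
  split_ifs with hxk0
  · have hpred := digit_of_lt (by omega : b - 1 < b)
    refine eq_of_digit_eq_on_support hb (vanish x hx) (fun j hj => ?_)
      (by simp [hpred, hk0, hx0, hxk0])
    rw [hpred, if_neg (by rintro rfl; simp at hj)]
  · exact eq_of_digit_eq_on_support hb (vanish x hx) (vanish _ fun _ => le_rfl)
      (by simp [hdp, hk0, hx0, (by omega : digit b x k = 1)])

theorem dPrime_pow_add_pred {b k : ℕ} (hb : 1 < b) (hk : 1 ≤ k) :
    DPrime b (b ^ k + (b - 1)) := by
  set p := b ^ k + (b - 1)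
  have hk0 : k ≠ 0 := by omega
  have hdp : ∀ j, digit b p j = if j = 0 then b - 1 else if j = k then 1 else 0 :=
    digit_pow_add_pred hb hk
  refine ⟨by have := Nat.one_le_pow k b (by omega); omega, fun m n h => ?_⟩
  obtain ⟨hm0, hn0⟩ := digit_zero_eq_pred_of_digit_dmul hb (by rw [h, hdp]; simp)
  have hm : ∀ j, digit b m j ≤ digit b p j := h ▸ digit_le_digit_dmul_left hb hn0
  have hn : ∀ j, digit b n j ≤ digit b p j := h ▸ digit_le_digit_dmul_right hb hm0
  -- digit `2k` of `p` is `0`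
  have not_both_one : min (digit b m k) (digit b n k) = 0 := by
    have h2k := min_digit_le_digit_dmul hb m n k k
    rw [h, hdp] at h2k
    simpa [hk0] using h2k
  -- digit `k` of `p` is `1`
  have not_both_zero : digit b m k ≠ 0 ∨ digit b n k ≠ 0 := by
    by_contra! hz
    have hpk : digit b p k = 0 := h ▸ digit_dmul_eq_zero hb fun i hi => by
      rcases eq_or_ne i 0 with rfl | hi0
      · exact .inr (by simpa using hz.2)
      · rcases eq_or_ne i k with rfl | hik
        · exact .inl hz.1
        · exact .inl (by simpa [hdp, hi0, hik] using hm i)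
    simp [hdp, hk0] at hpk
  have hm_eq := eq_of_digit_le_pow_add_pred hb hk hm hm0
  have hn_eq := eq_of_digit_le_pow_add_pred hb hk hn hn0
  rcases not_both_zero with hm1 | hn1
  · rw [if_neg hm1] at hm_eq
    rw [if_pos (by omega)] at hn_eq
    exact .inr ⟨hm_eq, hn_eq⟩
  · rw [if_pos (by omega)] at hm_eq
    rw [if_neg hn1] at hn_eq
    exact .inl ⟨hm_eq, hn_eq⟩

/-- for every `k ≥ 1`, the number `b^k + (b-1)` (digits
`1 0 ⋯ 0 (b-1)`) is a dismal prime; in particular there are infinitely many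
dismal primes in base `b`. -/
theorem dismal_prime_family (b : ℕ) (hb : 2 ≤ b) :
    (∀ k : ℕ, 1 ≤ k → DPrime b (b ^ k + (b - 1))) ∧
    {p : ℕ | DPrime b p}.Infinite := by
  refine ⟨fun k hk => dPrime_pow_add_pred hb hk, ?_⟩
  refine Set.infinite_of_injective_forall_mem (f := fun k => b ^ (k + 1) + (b - 1))
    (fun x y hxy => ?_) fun k => dPrime_pow_add_pred hb (Nat.le_add_left 1 k)
  simpa using Nat.pow_right_injective hb (Nat.add_right_cancel hxy)
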